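/- arXiv:2501.12893 — 4 statements merged into one kernel-verified Lean document; each statement's English description precedes it below -/
import Mathlib

section
/- Let each entry be independently positive with probability π, set ξ = π/(1−π) and λ = m/n, and let μ_+ (resp. μ_−) be the conditional database distribution given that the critical entry is positive (resp. negative). Then the subsampled count satisfies P[a_{F,m} = j/m | μ_+] = λ·C(m−1, j−1)·π^{j−1}(1−π)^{m−j} + (1−λ)·C(m, j)·π^j(1−π)^{m−j} and P[a_{F,m} = j/m | μ_−] = λ·C(m−1, j)·π^j(1−π)^{m−j−1} + (1−λ)·C(m, j)·π^j(1−π)^{m−j}, and the ratio of these two probabilities equals Q_+(j) = (λ·j + (1−λ)·m·π) / (λ·(m−j)·ξ + (1−λ)·m·π). -/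
/-!
Both conditional laws are mixtures of `Bin(m - 1, π)` (shifted by one under `μ₊`) and
`Bin(m, π)`, and each mixture component is a multiple of the same mass `Bin(m, π){j}`:
the identities `m·C(m-1, j-1) = j·C(m, j)` and `m·C(m-1, j) = (m-j)·C(m, j)` give
`m π · Bin(m-1, π){j-1} = j · Bin(m, π){j}` and
`m (1-π) · Bin(m-1, π){j} = (m-j) · Bin(m, π){j}`.
Multiplying both conditional masses by `m π` therefore exhibits the common factor
`Bin(m, π){j} > 0`, which cancels in the ratio.
-/

open MeasureTheory ProbabilityTheory
open scoped unitInterval NNReal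

set_option linter.deprecated false in
theorem PMF.toMeasure_map_val_binomial (p : ℝ≥0) (h : p ≤ 1) (n : ℕ) :
    ((PMF.binomial p h n).map Fin.val).toMeasure = Bin(n, ⟨p, p.2, by exact_mod_cast h⟩) := by
  refine Measure.ext_iff_singleton.mpr fun j => ?_
  rw [← PMF.toMeasure_map _ _ (measurable_of_countable _), binomial_singleton,
    Measure.map_apply (measurable_of_countable _) (measurableSet_singleton j)]
  rcases le_or_gt j n with hj | hj
  · have hpre : Fin.val ⁻¹' {j} = {(Fin.ofNat (n + 1) j : Fin (n + 1))} := by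
      ext i; simp [Fin.ext_iff, Nat.mod_eq_of_lt (Nat.lt_succ_of_le hj)]
    rw [hpre, PMF.toMeasure_apply_singleton _ _ (measurableSet_singleton _),
      ← PMF.binomial_apply_of_le hj]
  · have hpre : Fin.val ⁻¹' {j} = (∅ : Set (Fin (n + 1))) := by
      ext i; simp; omega
    simp [hpre, Nat.choose_eq_zero_of_lt hj]

theorem Measure.map_add_one_apply_singleton_add_one (μ : Measure ℕ) (j : ℕ) :
    μ.map (· + 1) {j + 1} = μ {j} := by
  rw [Measure.map_apply (measurable_of_countable _) (measurableSet_singleton _)]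
  congr 1; ext i; simp

theorem Measure.map_add_one_apply_singleton_zero (μ : Measure ℕ) :
    μ.map (· + 1) {0} = 0 := by
  rw [Measure.map_apply (measurable_of_countable _) (measurableSet_singleton _)]
  convert measure_empty (μ := μ)
  ext i; simp

theorem Measure.ofReal_smul_add_ofReal_smul_apply {α : Type*} [MeasurableSpace α]
    {μ ν : Measure α} [IsFiniteMeasure μ] [IsFiniteMeasure ν] {a b : ℝ} (ha : 0 ≤ a)
    (hb : 0 ≤ b) (s : Set α) :
    (ENNReal.ofReal a • μ + ENNReal.ofReal b • ν) s =
      ENNReal.ofReal (a * μ.real s + b * ν.real s) := by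
  rw [Measure.add_apply, Measure.smul_apply, Measure.smul_apply, smul_eq_mul, smul_eq_mul,
    ← ofReal_measureReal, ← ofReal_measureReal, ← ENNReal.ofReal_mul ha,
    ← ENNReal.ofReal_mul hb,
    ← ENNReal.ofReal_add (by positivity) (by positivity)]

theorem binomial_real_singleton_pos {n j : ℕ} {p : I} (hp0 : 0 < (p : ℝ)) (hp1 : (p : ℝ) < 1)
    (hj : j ≤ n) :
    0 < Bin(n, p).real {j} := by
  rw [binomial_real_singleton]
  have := Nat.choose_pos hj
  have : 0 < 1 - (p : ℝ) := by linarith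
  positivity

theorem binomial_real_map_add_one_singleton_mul (k j : ℕ) (p : I) :
    (Bin(k, p).map (· + 1)).real {j} * ((k + 1) * p) = j * Bin(k + 1, p).real {j} := by
  rcases j with _ | i
  · simp [measureReal_def, Measure.map_add_one_apply_singleton_zero]
  · have hc : ((k + 1 : ℕ) : ℝ) * k.choose i = (k + 1).choose (i + 1) * (i + 1 : ℕ) :=
      mod_cast Nat.add_one_mul_choose_eq k i
    rw [measureReal_def, Measure.map_add_one_apply_singleton_add_one, ← measureReal_def,
      binomial_real_singleton, binomial_real_singleton, Nat.add_sub_add_right]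
    push_cast at hc ⊢
    linear_combination (p : ℝ) ^ (i + 1) * (1 - (p : ℝ)) ^ (k - i) * hc

theorem binomial_real_singleton_mul {k j : ℕ} (p : I) (hj : j ≤ k + 1) :
    Bin(k, p).real {j} * ((k + 1) * (1 - p)) = ((k : ℝ) + 1 - j) * Bin(k + 1, p).real {j} := by
  rcases hj.lt_or_eq with hj | rfl
  · have hc :
        (k.choose j : ℝ) * ((k + 1 : ℕ) : ℝ) = (k + 1).choose j * ((k + 1 - j : ℕ) : ℝ) :=
      mod_cast Nat.choose_mul_succ_eq k j
    rw [binomial_real_singleton, binomial_real_singleton, show k + 1 - j = k - j + 1 by omega,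
      pow_succ]
    push_cast [Nat.cast_sub hj.le] at hc ⊢
    linear_combination (p : ℝ) ^ j * (1 - (p : ℝ)) ^ (k - j) * (1 - (p : ℝ)) * hc
  · simp [binomial_real_singleton]

theorem binomial_mixture_real_singleton_div {k j : ℕ} {p : I} (hp0 : 0 < (p : ℝ))
    (hp1 : (p : ℝ) < 1) (hj : j ≤ k + 1) (lam : ℝ) :
    (lam * (Bin(k, p).map (· + 1)).real {j} + (1 - lam) * Bin(k + 1, p).real {j}) /
        (lam * Bin(k, p).real {j} + (1 - lam) * Bin(k + 1, p).real {j}) =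
      (lam * j + (1 - lam) * (k + 1) * p) /
        (lam * ((k : ℝ) + 1 - j) * (p / (1 - p)) + (1 - lam) * (k + 1) * p) := by
  have hξ : p / (1 - p) * (1 - p) = (p : ℝ) := div_mul_cancel₀ _ (sub_ne_zero.mpr hp1.ne')
  have hB : Bin(k + 1, p).real {j} ≠ 0 := (binomial_real_singleton_pos hp0 hp1 hj).ne'
  refine (mul_div_mul_right _ _ (c := (k + 1) * (p : ℝ)) (by positivity)).symm.trans
    (Eq.trans ?_ (mul_div_mul_left _ _ hB))
  congr 1
  · linear_combination lam * binomial_real_map_add_one_singleton_mul k j p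
  · linear_combination lam * (p / (1 - p)) * binomial_real_singleton_mul p hj
      - lam * Bin(k, p).real {j} * (k + 1) * hξ

/-- **Conditional subsample distributions and their likelihood ratio.**
Each entry of a database of size `n` is independently positive with probability `π`;
a subsample of size `m` is drawn (in the binomial model), where the critical entry is
included with probability `λ = m/n`.  Conditioned on the critical entry being positive
(resp. negative), the number of positive elements in the subsample is distributed as the
mixture `μ₊ = λ·(1 + Bin(m−1,π)) + (1−λ)·Bin(m,π)` (resp.
`μ₋ = λ·Bin(m−1,π) + (1−λ)·Bin(m,π)`).  Then, with `ξ = π/(1−π)`,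
`P[a_{F,m} = j/m ∣ μ₊] = λ·C(m−1,j−1)·π^{j−1}(1−π)^{m−j} + (1−λ)·C(m,j)·π^j(1−π)^{m−j}`
(for `1 ≤ j ≤ m`),
`P[a_{F,m} = j/m ∣ μ₋] = λ·C(m−1,j)·π^j(1−π)^{m−j−1} + (1−λ)·C(m,j)·π^j(1−π)^{m−j}`,
and the ratio of the two probabilities equals
`Q₊(j) = (λ·j + (1−λ)·m·π) / (λ·(m−j)·ξ + (1−λ)·m·π)`. -/
theorem subsample_conditional_distributions_and_ratio
    (n m : ℕ) (hm : 0 < m) (hmn : m ≤ n) (π : ℝ) (hπ0 : 0 < π) (hπ1 : π < 1) :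
    let lam : ℝ := (m : ℝ) / n
    let ξ : ℝ := π / (1 - π)
    let binom : ℕ → Measure ℕ := fun k =>
      ((PMF.binomial (Real.toNNReal π)
          (show Real.toNNReal π ≤ 1 from Real.toNNReal_le_one.mpr hπ1.le) k).map
        Fin.val).toMeasure
    let μp : Measure ℕ :=
      ENNReal.ofReal lam • ((binom (m - 1)).map (· + 1))
        + ENNReal.ofReal (1 - lam) • binom m
    let μm : Measure ℕ :=
      ENNReal.ofReal lam • binom (m - 1) + ENNReal.ofReal (1 - lam) • binom m
    (∀ j : ℕ, 1 ≤ j → j ≤ m →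
        μp {j} = ENNReal.ofReal (lam * ((m - 1).choose (j - 1) : ℝ) * π ^ (j - 1)
            * (1 - π) ^ (m - j)
          + (1 - lam) * (m.choose j : ℝ) * π ^ j * (1 - π) ^ (m - j)))
    ∧ (∀ j : ℕ, j ≤ m →
        μm {j} = ENNReal.ofReal (lam * ((m - 1).choose j : ℝ) * π ^ j
            * (1 - π) ^ (m - j - 1)
          + (1 - lam) * (m.choose j : ℝ) * π ^ j * (1 - π) ^ (m - j)))
    ∧ (∀ j : ℕ, j ≤ m →
        (μp {j}).toReal / (μm {j}).toReal
          = (lam * j + (1 - lam) * m * π) / (lam * ((m : ℝ) - j) * ξ + (1 - lam) * m * π)) := by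
  intro lam ξ binom μp μm
  obtain ⟨k, rfl⟩ := Nat.exists_eq_add_one_of_ne_zero hm.ne'
  obtain ⟨p, rfl⟩ : ∃ p : I, (p : ℝ) = π := ⟨⟨π, hπ0.le, hπ1.le⟩, rfl⟩
  have hbinom (i : ℕ) : binom i = Bin(i, p) :=
    (PMF.toMeasure_map_val_binomial _ _ i).trans (by congr; exact Real.coe_toNNReal _ hπ0.le)
  have hlam0 : 0 ≤ lam := by positivity
  have hlam1 : 0 ≤ 1 - lam := sub_nonneg.mpr (div_le_one_of_le₀ (mod_cast hmn) n.cast_nonneg)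
  have hμp (j : ℕ) : μp {j} = ENNReal.ofReal
      (lam * (Bin(k, p).map (· + 1)).real {j} + (1 - lam) * Bin(k + 1, p).real {j}) := by
    simp only [μp, hbinom, Nat.add_sub_cancel]
    exact Measure.ofReal_smul_add_ofReal_smul_apply hlam0 hlam1 _
  have hμm (j : ℕ) : μm {j} =
      ENNReal.ofReal (lam * Bin(k, p).real {j} + (1 - lam) * Bin(k + 1, p).real {j}) := by
    simp only [μm, hbinom, Nat.add_sub_cancel]
    exact Measure.ofReal_smul_add_ofReal_smul_apply hlam0 hlam1 _
  refine ⟨fun j hj1 hjm => ?_, fun j hjm => ?_, fun j hjm => ?_⟩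
  · obtain ⟨i, rfl⟩ := Nat.exists_eq_add_one_of_ne_zero (Nat.one_le_iff_ne_zero.mp hj1)
    rw [hμp, measureReal_def, Measure.map_add_one_apply_singleton_add_one, ← measureReal_def,
      binomial_real_singleton, binomial_real_singleton]
    simp only [Nat.add_sub_cancel, Nat.add_sub_add_right]
    congr 1; ring
  · rw [hμm, binomial_real_singleton, binomial_real_singleton, Nat.add_sub_cancel,
      show k + 1 - j - 1 = k - j by omega]
    congr 1; ring
  · rw [hμp, hμm, ENNReal.toReal_ofReal (by positivity), ENNReal.toReal_ofReal (by positivity),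
      binomial_mixture_real_singleton_div hπ0 hπ1 hjm]
    push_cast
    rfl
end

section
/- The likelihood ratio Q_+(j) = (λ·j + (1−λ)·m·π) / (λ·(m−j)·π/(1−π) + (1−λ)·m·π) is monotone increasing in j, takes the value 1 at j = π·m, and for j = (1+γ)·π·m with 0 ≤ γ ≤ 1/π − 1 it equals (1 + λγ) / (1 − λγ·π/(1−π)). Consequently the equation e^ε = Q_+((1+γ)·π·m) has the unique solution γ*_+ = λ^{−1} · (e^ε − 1) / (1 + e^ε · π/(1−π)), and for all j ≤ (1 + min{γ*_+, 1/π − 1})·π·m it holds that Q_+(j) ≤ e^ε. -/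
set_option maxHeartbeats 1000000 in
/-- **Properties of the likelihood ratio `Q₊`.**
For a database of size `n` whose entries are independently positive with probability `π`
(`0 < π < 1`), sample size `m`, sampling rate `λ = m/n` (`0 < λ < 1`) and `ε ≥ 0`, the
likelihood ratio `Q₊(j) = (λ·j + (1−λ)·m·π) / (λ·(m−j)·π/(1−π) + (1−λ)·m·π)` is monotone
increasing in `j` (on `[0, m]`), takes the value `1` at `j = π·m`, and for
`j = (1+γ)·π·m` with `0 ≤ γ ≤ 1/π − 1` equals `(1 + λγ)/(1 − λγ·π/(1−π))`.  Consequently,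
the equation `e^ε = Q₊((1+γ)·π·m)` has the unique solution
`γ*₊ = λ⁻¹·(e^ε − 1)/(1 + e^ε·π/(1−π))`, and for all `j ≤ (1 + min{γ*₊, 1/π − 1})·π·m`
it holds that `Q₊(j) ≤ e^ε`. -/
theorem Qplus_monotone_value_and_threshold
    (m : ℕ) (hm : 0 < m) (lam π ε : ℝ)
    (hlam0 : 0 < lam) (hlam1 : lam < 1) (hπ0 : 0 < π) (hπ1 : π < 1) (hε : 0 ≤ ε) :
    let Q : ℝ → ℝ := fun j =>
      (lam * j + (1 - lam) * m * π) / (lam * ((m : ℝ) - j) * π / (1 - π) + (1 - lam) * m * π)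
    let γs : ℝ := lam⁻¹ * (Real.exp ε - 1) / (1 + Real.exp ε * π / (1 - π))
    MonotoneOn Q (Set.Icc 0 (m : ℝ))
    ∧ Q (π * m) = 1
    ∧ (∀ γ : ℝ, 0 ≤ γ → γ ≤ 1 / π - 1 →
        Q ((1 + γ) * π * m) = (1 + lam * γ) / (1 - lam * γ * π / (1 - π)))
    ∧ (∀ γ : ℝ,
        Real.exp ε = (1 + lam * γ) / (1 - lam * γ * π / (1 - π)) ↔ γ = γs)
    ∧ (∀ j : ℝ, 0 ≤ j → j ≤ (1 + min γs (1 / π - 1)) * π * m → Q j ≤ Real.exp ε) := by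
  intro Q γs
  have h1π : (0:ℝ) < 1 - π := by linarith
  have h1lam : (0:ℝ) < 1 - lam := by linarith
  have hmr : (0:ℝ) < (m:ℝ) := by exact_mod_cast hm
  set E := Real.exp ε with hE
  have hE1 : (1:ℝ) ≤ E := Real.one_le_exp hε
  have hEpos : (0:ℝ) < E := by linarith
  -- denominator-cleared form of Q
  have hQeq : ∀ j : ℝ, Q j =
      ((lam * j + (1 - lam) * m * π) * (1 - π)) /
        (lam * ((m : ℝ) - j) * π + (1 - lam) * m * π * (1 - π)) := by
    intro j
    show (lam * j + (1 - lam) * ↑m * π) / (lam * (↑m - j) * π / (1 - π) + (1 - lam) * ↑m * π) = _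
    rw [show lam * (↑m - j) * π / (1 - π) + (1 - lam) * ↑m * π
        = (lam * ((m : ℝ) - j) * π + (1 - lam) * m * π * (1 - π)) / (1 - π) by
      field_simp]
    rw [div_div_eq_mul_div]
  have hD' : ∀ j : ℝ, j ≤ (m : ℝ) →
      0 < lam * ((m : ℝ) - j) * π + (1 - lam) * m * π * (1 - π) := by
    intro j hj
    have h1 : 0 ≤ lam * ((m : ℝ) - j) * π :=
      mul_nonneg (mul_nonneg hlam0.le (by linarith)) hπ0.le
    nlinarith [mul_pos (mul_pos (mul_pos h1lam hmr) hπ0) h1π]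
  -- Part 1: monotonicity
  have hmono : MonotoneOn Q (Set.Icc 0 (m : ℝ)) := by
    intro x hx y hy hxy
    rw [hQeq x, hQeq y, div_le_div_iff₀ (hD' x hx.2) (hD' y hy.2)]
    nlinarith [mul_nonneg (mul_nonneg (mul_nonneg h1π.le hlam0.le) (sub_nonneg.2 hxy))
      (show (0:ℝ) ≤ lam * π * m + (1 - lam) * m * π from by positivity)]
  -- Part 2: value 1 at π·m
  have hval1 : Q (π * m) = 1 := by
    rw [hQeq, div_eq_one_iff_eq (ne_of_gt (by nlinarith [hD' (π * m) (by nlinarith)]))]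
    ring
  -- bound on γ·π
  have hγπ : ∀ γ : ℝ, γ ≤ 1 / π - 1 → γ * π ≤ 1 - π := by
    intro γ hγ1
    rw [show (1:ℝ) / π - 1 = (1 - π) / π by field_simp] at hγ1
    exact (le_div_iff₀ hπ0).mp hγ1
  -- key positivity for part 3 denominators
  have hden : ∀ γ : ℝ, 0 ≤ γ → γ ≤ 1 / π - 1 → 0 < (1 - π) - lam * γ * π := by
    intro γ hγ0 hγ1
    have hγπ' := hγπ γ hγ1
    rcases eq_or_lt_of_le hγ0 with h | h
    · rw [← h]; simpa using h1π
    · have h2 : 0 < γ * π := mul_pos h hπ0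
      nlinarith
  -- Part 3: value at (1+γ)·π·m
  have hval3 : ∀ γ : ℝ, 0 ≤ γ → γ ≤ 1 / π - 1 →
      Q ((1 + γ) * π * m) = (1 + lam * γ) / (1 - lam * γ * π / (1 - π)) := by
    intro γ hγ0 hγ1
    have hd := hden γ hγ0 hγ1
    have hjm : (1 + γ) * π * m ≤ (m : ℝ) := by
      nlinarith [mul_le_mul_of_nonneg_right (hγπ γ hγ1) hmr.le]
    rw [hQeq, show (1:ℝ) - lam * γ * π / (1 - π) = ((1 - π) - lam * γ * π) / (1 - π) by
      field_simp, div_div_eq_mul_div,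
      div_eq_div_iff (ne_of_gt (hD' _ hjm)) (ne_of_gt hd)]
    ring
  -- auxiliary facts about γs
  have hk' : (0:ℝ) < (1 - π) + E * π := by nlinarith
  have hγs : γs = (E - 1) * (1 - π) / (lam * ((1 - π) + E * π)) := by
    show lam⁻¹ * (E - 1) / (1 + E * π / (1 - π)) = _
    rw [div_eq_div_iff (by positivity) (by positivity)]
    field_simp
  have hγs0 : 0 ≤ γs := by
    rw [hγs]
    apply div_nonneg (by nlinarith) (by positivity)
  have hγsk : lam * γs * ((1 - π) + E * π) = (E - 1) * (1 - π) := by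
    rw [hγs, mul_comm lam, mul_assoc, div_mul_eq_mul_div]
    exact mul_div_cancel_right₀ _ (by positivity)
  -- Part 4: unique solution
  have hiff : ∀ γ : ℝ,
      E = (1 + lam * γ) / (1 - lam * γ * π / (1 - π)) ↔ γ = γs := by
    intro γ
    constructor
    · intro h
      have hd : 1 - lam * γ * π / (1 - π) ≠ 0 := by
        intro h0
        rw [h0, div_zero] at h
        linarith
      have h2 : E * (1 - lam * γ * π / (1 - π)) = 1 + lam * γ := by
        rw [h, div_mul_cancel₀ _ hd]
      have h3 : E * ((1 - π) - lam * γ * π) = (1 + lam * γ) * (1 - π) := by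
        field_simp at h2
        linarith
      have h4 : lam * γ * ((1 - π) + E * π) = lam * γs * ((1 - π) + E * π) := by
        rw [hγsk]; nlinarith [h3]
      have h5 := mul_right_cancel₀ (ne_of_gt hk') h4
      exact mul_left_cancel₀ (ne_of_gt hlam0) h5
    · rintro rfl
      have hd : 1 - lam * γs * π / (1 - π) = 1 / ((1 - π) + E * π) := by
        rw [hγs]
        field_simp
        ring
      have hn : 1 + lam * γs = E / ((1 - π) + E * π) := by
        rw [hγs]
        field_simp
        ring
      rw [hd, hn]
      field_simp
  -- Part 5: the threshold bound
  refine ⟨hmono, hval1, hval3, hiff, ?_⟩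
  intro j hj0 hj
  set γ0 : ℝ := min γs (1 / π - 1) with hγ0def
  have hγ00 : 0 ≤ γ0 := le_min hγs0 (by
    have : π * (1 / π - 1) = 1 - π := by field_simp
    nlinarith)
  have hγ0le : γ0 ≤ 1 / π - 1 := min_le_right _ _
  have hγ0γs : γ0 ≤ γs := min_le_left _ _
  have hj0m : (1 + γ0) * π * m ≤ (m : ℝ) := by
    nlinarith [mul_le_mul_of_nonneg_right (hγπ γ0 hγ0le) hmr.le]
  have hjm : j ≤ (m : ℝ) := le_trans hj hj0m
  have hmono' : Q j ≤ Q ((1 + γ0) * π * m) :=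
    hmono ⟨hj0, hjm⟩ ⟨by positivity, hj0m⟩ hj
  refine le_trans hmono' ?_
  rw [hQeq, div_le_iff₀ (hD' _ hj0m)]
  have hkey : lam * γ0 * ((1 - π) + E * π) ≤ (E - 1) * (1 - π) := by
    rw [← hγsk]
    exact mul_le_mul_of_nonneg_right (mul_le_mul_of_nonneg_left hγ0γs hlam0.le) hk'.le
  nlinarith [mul_le_mul_of_nonneg_left hkey (mul_nonneg hmr.le hπ0.le)]
end

section
/- The reciprocal likelihood ratio Q_−(j) = (λ·(m−j)·π/(1−π) + (1−λ)·m·π) / (λ·j + (1−λ)·m·π) is monotone decreasing in j, and for j = (1−γ)·π·m with 0 ≤ γ ≤ 1 it equals (1 + λγ·π/(1−π)) / (1 − λγ). Consequently the equation e^ε = Q_−((1−γ)·π·m) has the unique solution γ*_− = λ^{−1} · (1 − e^{−ε}) / (1 + e^{−ε} · π/(1−π)), and for all j ≥ (1 − min{γ*_−, 1})·π·m it holds that Q_−(j) ≤ e^ε. -/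
set_option maxHeartbeats 800000


/-- **Properties of the reciprocal likelihood ratio `Q₋`.**
For a database of size `n` whose entries are independently positive with probability `π`
(`0 < π < 1`), sample size `m`, sampling rate `λ = m/n` (`0 < λ < 1`) and `ε ≥ 0`, the
reciprocal likelihood ratio
`Q₋(j) = (λ·(m−j)·π/(1−π) + (1−λ)·m·π) / (λ·j + (1−λ)·m·π)` is monotone decreasing in `j`
(on `[0, m]`), and for `j = (1−γ)·π·m` with `0 ≤ γ ≤ 1` it equals
`(1 + λγ·π/(1−π))/(1 − λγ)`.  Consequently the equation `e^ε = Q₋((1−γ)·π·m)` has the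
unique solution `γ*₋ = λ⁻¹·(1 − e^{−ε})/(1 + e^{−ε}·π/(1−π))`, and for all
`j ≥ (1 − min{γ*₋, 1})·π·m` it holds that `Q₋(j) ≤ e^ε`. -/
theorem Qminus_antitone_value_and_threshold
    (m : ℕ) (hm : 0 < m) (lam π ε : ℝ)
    (hlam0 : 0 < lam) (hlam1 : lam < 1) (hπ0 : 0 < π) (hπ1 : π < 1) (hε : 0 ≤ ε) :
    let Q : ℝ → ℝ := fun j =>
      (lam * ((m : ℝ) - j) * π / (1 - π) + (1 - lam) * m * π) / (lam * j + (1 - lam) * m * π)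
    let γs : ℝ := lam⁻¹ * (1 - Real.exp (-ε)) / (1 + Real.exp (-ε) * π / (1 - π))
    AntitoneOn Q (Set.Icc 0 (m : ℝ))
    ∧ (∀ γ : ℝ, 0 ≤ γ → γ ≤ 1 →
        Q ((1 - γ) * π * m) = (1 + lam * γ * π / (1 - π)) / (1 - lam * γ))
    ∧ (∀ γ : ℝ,
        Real.exp ε = (1 + lam * γ * π / (1 - π)) / (1 - lam * γ) ↔ γ = γs)
    ∧ (∀ j : ℝ, (1 - min γs 1) * π * m ≤ j → j ≤ (m : ℝ) → Q j ≤ Real.exp ε) := by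
  intro Q γs
  have hQdef : Q = fun j : ℝ =>
      (lam * ((m : ℝ) - j) * π / (1 - π) + (1 - lam) * m * π) / (lam * j + (1 - lam) * m * π) :=
    rfl
  have hγsdef : γs = lam⁻¹ * (1 - Real.exp (-ε)) / (1 + Real.exp (-ε) * π / (1 - π)) := rfl
  have hm' : (0:ℝ) < m := by exact_mod_cast hm
  have hπ' : (0:ℝ) < 1 - π := by linarith
  set E := Real.exp ε with hEdef
  have hE0 : 0 < E := Real.exp_pos ε
  have hE1 : 1 ≤ E := Real.one_le_exp hε
  have hcoef : 0 < E * (1 - π) + π := by positivity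
  have hDE : (1 + E⁻¹ * π / (1 - π)) ≠ 0 := by
    have : 0 < 1 + E⁻¹ * π / (1 - π) := by positivity
    exact this.ne'
  have hγslin : lam * γs * (E * (1 - π) + π) = (E - 1) * (1 - π) := by
    rw [hγsdef, Real.exp_neg]
    field_simp
    ring
  have hlamγs0 : 0 ≤ lam * γs := by
    nlinarith [hγslin, hcoef, mul_nonneg (by linarith : (0:ℝ) ≤ E - 1) hπ'.le]
  have hγs0 : 0 ≤ γs := by nlinarith [hlamγs0]
  have hlamγs1 : lam * γs < 1 := by nlinarith [hγslin, hcoef]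
  -- antitone
  have anti : AntitoneOn Q (Set.Icc 0 (m:ℝ)) := by
    intro a ha b hb hab
    obtain ⟨ha0, ham⟩ := ha
    obtain ⟨hb0, hbm⟩ := hb
    have hc0 : 0 < (1 - lam) * m * π := mul_pos (mul_pos (by linarith) hm') hπ0
    have hdena : 0 < lam * a + (1 - lam) * m * π := by nlinarith [mul_nonneg hlam0.le ha0]
    have hdenb : 0 < lam * b + (1 - lam) * m * π := by nlinarith [mul_nonneg hlam0.le hb0]
    simp only [hQdef]
    rw [div_le_div_iff₀ hdenb hdena]
    have hu : 0 < (1 - π)⁻¹ := inv_pos.2 hπ'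
    have hp1 : 0 < lam * m * π * (1-π)⁻¹ := mul_pos (mul_pos (mul_pos hlam0 hm') hπ0) hu
    have hp3 : 0 < lam * π * (1-π)⁻¹ := mul_pos (mul_pos hlam0 hπ0) hu
    have hint : 0 ≤ (b - a) * (lam * (lam * m * π * (1-π)⁻¹ + (1-lam) * m * π)
        + lam * π * (1-π)⁻¹ * ((1-lam) * m * π)) :=
      mul_nonneg (by linarith)
        (le_of_lt (add_pos (mul_pos hlam0 (add_pos hp1 hc0)) (mul_pos hp3 hc0)))
    have hdiv1 : lam * ((m:ℝ) - a) * π / (1 - π) = lam * ((m:ℝ) - a) * π * (1-π)⁻¹ := by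
      rw [div_eq_mul_inv]
    have hdiv2 : lam * ((m:ℝ) - b) * π / (1 - π) = lam * ((m:ℝ) - b) * π * (1-π)⁻¹ := by
      rw [div_eq_mul_inv]
    rw [hdiv1, hdiv2]
    nlinarith [hint]
  -- value
  have hval : ∀ γ : ℝ, 0 ≤ γ → γ ≤ 1 →
      Q ((1 - γ) * π * m) = (1 + lam * γ * π / (1 - π)) / (1 - lam * γ) := by
    intro γ h0 h1
    have hlg : lam * γ < 1 := by nlinarith [mul_le_mul_of_nonneg_left h1 hlam0.le]
    have hden : 0 < lam * ((1 - γ) * π * m) + (1 - lam) * m * π := by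
      nlinarith [mul_pos (mul_pos hπ0 hm') (by linarith : (0:ℝ) < 1 - lam * γ)]
    simp only [hQdef]
    rw [div_eq_div_iff hden.ne' (by linarith : (0:ℝ) < 1 - lam * γ).ne']
    field_simp
    ring
  refine ⟨anti, hval, ?_, ?_⟩
  · intro γ
    constructor
    · intro h
      by_cases hc : (1:ℝ) - lam * γ = 0
      · rw [hc, div_zero] at h
        exact absurd h hE0.ne'
      · rw [eq_div_iff hc] at h
        have hlin : lam * γ * (E * (1 - π) + π) = (E - 1) * (1 - π) := by
          field_simp at h
          linear_combination -h
        have h4 : lam * γ * (E * (1 - π) + π) = lam * γs * (E * (1 - π) + π) := by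
          rw [hlin, hγslin]
        exact mul_left_cancel₀ hlam0.ne' (mul_right_cancel₀ hcoef.ne' h4)
    · intro h
      rw [h, eq_div_iff (by linarith : (1:ℝ) - lam * γs ≠ 0)]
      field_simp
      linear_combination -hγslin
  · intro j hj1 hj2
    set g := min γs 1 with hgdef
    have hg0 : 0 ≤ g := le_min hγs0 zero_le_one
    have hg1 : g ≤ 1 := min_le_right _ _
    have hgγs : g ≤ γs := min_le_left _ _
    have hj0 : (0:ℝ) ≤ (1 - g) * π * m := by
      apply mul_nonneg (mul_nonneg (by linarith) hπ0.le) hm'.le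
    have hj0m : (1 - g) * π * m ≤ m := by nlinarith
    have h1 : Q j ≤ Q ((1 - g) * π * m) :=
      anti (Set.mem_Icc.2 ⟨hj0, hj0m⟩) (Set.mem_Icc.2 ⟨le_trans hj0 hj1, hj2⟩) hj1
    have h2 : Q ((1 - g) * π * m) = (1 + lam * g * π / (1 - π)) / (1 - lam * g) :=
      hval g hg0 hg1
    have hlg : lam * g < 1 := by nlinarith
    have hle : lam * g ≤ lam * γs := mul_le_mul_of_nonneg_left hgγs hlam0.le
    have key' : (1 - π) + lam * g * π ≤ E * (1 - lam * g) * (1 - π) := by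
      nlinarith [hγslin, mul_le_mul_of_nonneg_right hle hcoef.le]
    have hNd : (1 + lam * g * π / (1 - π)) * (1 - π) = (1 - π) + lam * g * π := by
      field_simp
    have h3 : (1 + lam * g * π / (1 - π)) / (1 - lam * g) ≤ E := by
      rw [div_le_iff₀ (by linarith : (0:ℝ) < 1 - lam * g)]
      have h5 : (1 + lam * g * π / (1 - π)) * (1 - π) ≤ (E * (1 - lam * g)) * (1 - π) := by
        rw [hNd]; nlinarith [key']
      exact le_of_mul_le_mul_right h5 hπ'
    calc Q j ≤ Q ((1 - g) * π * m) := h1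
      _ = (1 + lam * g * π / (1 - π)) / (1 - lam * g) := h2
      _ ≤ E := h3
end

section
/- Tightness of the Laplace bound: in the setting of a property query F on databases of size n with each entry independently positive with probability π (0 < π < 1) and Laplace noise LAP_ψ with scale ψ > 0, for the set S = [1, ∞) the bound is attained with equality: P[Y_{F,LAP_ψ} ∈ S | μ_+] = e^{1/(ψn)} · P[Y_{F,LAP_ψ} ∈ S | μ_−]. -/
/-!
Above `c ≤ b` the Laplace density is `e^{-x/ψ}/(2ψ)`, so noise shifted by `c` puts mass
`e^{-(b-c)/ψ}/2` on `[b, ∞)`. Moving the shift from `j/n` to `(j+1)/n` therefore multiplies the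
tail mass on `[1, ∞)` by exactly `e^{1/(ψn)}`, as long as `(j+1)/n ≤ 1`, which holds for every
count `j ≤ n - 1` in the support of the binomial law; mixing over `j` preserves the factor.
-/

open MeasureTheory Set

noncomputable def laplaceMeasure (ψ : ℝ) : Measure ℝ :=
  volume.withDensity fun x => ENNReal.ofReal (1 / (2 * ψ) * Real.exp (-|x| / ψ))

lemma laplaceMeasure_Ici {ψ a : ℝ} (hψ : 0 < ψ) (ha : 0 ≤ a) :
    laplaceMeasure ψ (Ici a) = ENNReal.ofReal (Real.exp (-a / ψ) / 2) := by
  have hdensity : ∀ x ∈ Ici a, ENNReal.ofReal (1 / (2 * ψ) * Real.exp (-|x| / ψ))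
      = ENNReal.ofReal (1 / (2 * ψ) * Real.exp (-ψ⁻¹ * x)) := fun x hx => by
    rw [abs_of_nonneg (ha.trans hx), neg_mul, inv_mul_eq_div, neg_div]
  have hint : IntegrableOn (fun x => 1 / (2 * ψ) * Real.exp (-ψ⁻¹ * x)) (Ici a) :=
    (integrableOn_Ici_iff_integrableOn_Ioi).mpr
      ((integrableOn_exp_mul_Ioi (by simpa using hψ) a).const_mul _)
  rw [laplaceMeasure, withDensity_apply _ measurableSet_Ici,
    setLIntegral_congr_fun measurableSet_Ici hdensity,
    ← ofReal_integral_eq_lintegral_ofReal hint (.of_forall fun x => by positivity),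
    integral_Ici_eq_integral_Ioi, integral_const_mul,
    integral_exp_mul_Ioi (by simpa using hψ)]
  congr 1
  field_simp

lemma laplaceMeasure_map_add_Ici {ψ b c : ℝ} (hψ : 0 < ψ) (hc : c ≤ b) :
    (laplaceMeasure ψ).map (· + c) (Ici b) = ENNReal.ofReal (Real.exp (-(b - c) / ψ) / 2) := by
  rw [Measure.map_apply (by fun_prop) measurableSet_Ici,
    ← laplaceMeasure_Ici hψ (sub_nonneg.mpr hc)]
  congr 1
  ext x
  simp

lemma laplaceMeasure_map_add_Ici_eq_mul {ψ b c d : ℝ} (hψ : 0 < ψ) (hd : 0 ≤ d)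
    (hcd : c + d ≤ b) :
    (laplaceMeasure ψ).map (· + (c + d)) (Ici b)
      = ENNReal.ofReal (Real.exp (d / ψ)) * (laplaceMeasure ψ).map (· + c) (Ici b) := by
  rw [laplaceMeasure_map_add_Ici hψ hcd, laplaceMeasure_map_add_Ici hψ (by linarith),
    ← ENNReal.ofReal_mul (Real.exp_pos _).le, mul_div_assoc', ← Real.exp_add]
  congr 3
  ring

lemma MeasureTheory.Measure.bind_apply_eq_const_mul {α β : Type*} [MeasurableSpace α]
    [MeasurableSpace β] {ν : Measure α} {K₁ K₂ : α → Measure β} {s : Set β} {r : ENNReal}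
    (hs : MeasurableSet s) (hK₁ : AEMeasurable K₁ ν) (hK₂ : AEMeasurable K₂ ν) (hr : r ≠ ⊤)
    (h : ∀ᵐ a ∂ν, K₁ a s = r * K₂ a s) :
    ν.bind K₁ s = r * ν.bind K₂ s := by
  rw [Measure.bind_apply hs hK₁, Measure.bind_apply hs hK₂, ← lintegral_const_mul' _ _ hr]
  exact lintegral_congr_ae h

lemma PMF.ae_toMeasure_map_val_lt {m : ℕ} (q : PMF (Fin m)) :
    ∀ᵐ j ∂(q.map Fin.val).toMeasure, j < m := by
  rw [← PMF.toMeasure_map (f := Fin.val) q measurable_from_top]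
  exact (ae_map_iff measurable_from_top.aemeasurable measurableSet_Iio).mpr (.of_forall Fin.isLt)

lemma Nat.cast_add_one_div_le_one {j n : ℕ} (hj : j < n - 1 + 1) : ((j : ℝ) + 1) / n ≤ 1 := by
  rcases Nat.eq_zero_or_pos n with rfl | hn
  · simp
  · rw [div_le_one (by positivity)]
    exact_mod_cast (by omega : j + 1 ≤ n)

theorem laplace_noise_bound_tight_general
    (n : ℕ) (π ψ : ℝ) (hπ1 : π < 1) (hψ : 0 < ψ) :
    let binom : Measure ℕ :=
      ((PMF.binomial (Real.toNNReal π)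
          (show Real.toNNReal π ≤ 1 from Real.toNNReal_le_one.mpr hπ1.le) (n - 1)).map
        Fin.val).toMeasure
    let lap : Measure ℝ :=
      volume.withDensity fun x => ENNReal.ofReal (1 / (2 * ψ) * Real.exp (-|x| / ψ))
    let μp : Measure ℝ := binom.bind fun j => lap.map fun x => x + ((j : ℝ) + 1) / n
    let μm : Measure ℝ := binom.bind fun j => lap.map fun x => x + (j : ℝ) / n
    (μp (Set.Ici (1 : ℝ))).toReal = Real.exp (1 / (ψ * n)) * (μm (Set.Ici (1 : ℝ))).toReal := by
  intro binom lap μp μm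
  have hshift : ∀ j < n - 1 + 1, (lap.map fun x => x + ((j : ℝ) + 1) / n) (Ici 1)
      = ENNReal.ofReal (Real.exp (1 / (ψ * n)))
        * (lap.map fun x => x + (j : ℝ) / n) (Ici 1) := by
    intro j hj
    have h := laplaceMeasure_map_add_Ici_eq_mul (b := 1) (c := j / n) (d := 1 / n) hψ
      (by positivity) (by rw [← add_div]; exact Nat.cast_add_one_div_le_one hj)
    rwa [← add_div, div_div, mul_comm (n : ℝ)] at h
  have hμ : μp (Ici 1) = ENNReal.ofReal (Real.exp (1 / (ψ * n))) * μm (Ici 1) :=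
    Measure.bind_apply_eq_const_mul measurableSet_Ici measurable_from_top.aemeasurable
      measurable_from_top.aemeasurable ENNReal.ofReal_ne_top
      ((PMF.ae_toMeasure_map_val_lt _).mono hshift)
  rw [hμ, ENNReal.toReal_mul, ENNReal.toReal_ofReal (Real.exp_pos _).le]

/-- **Tightness of the Laplace bound.**
In the setting of a property query `F` on databases of size `n` with each entry
independently positive with probability `π` (`0 < π < 1`) and Laplace noise `LAP_ψ` with
scale `ψ > 0` (conditioned on the critical entry, the number of positive entries is
`1 + Bin(n−1,π)` resp. `Bin(n−1,π)`, and the released value is the fraction plus Laplace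
noise), for the set `S = [1, ∞)` the privacy bound is attained with equality:
`P[Y_{F,LAP_ψ} ∈ S ∣ μ₊] = e^{1/(ψn)}·P[Y_{F,LAP_ψ} ∈ S ∣ μ₋]`. -/
theorem laplace_noise_bound_tight
    (n : ℕ) (hn : 0 < n) (π ψ : ℝ) (hπ0 : 0 < π) (hπ1 : π < 1) (hψ : 0 < ψ) :
    let binom : Measure ℕ :=
      ((PMF.binomial (Real.toNNReal π)
          (show Real.toNNReal π ≤ 1 from Real.toNNReal_le_one.mpr hπ1.le) (n - 1)).map
        Fin.val).toMeasure
    let lap : Measure ℝ :=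
      volume.withDensity fun x => ENNReal.ofReal (1 / (2 * ψ) * Real.exp (-|x| / ψ))
    let μp : Measure ℝ := binom.bind fun j => lap.map fun x => x + ((j : ℝ) + 1) / n
    let μm : Measure ℝ := binom.bind fun j => lap.map fun x => x + (j : ℝ) / n
    (μp (Set.Ici (1 : ℝ))).toReal = Real.exp (1 / (ψ * n)) * (μm (Set.Ici (1 : ℝ))).toReal :=
  laplace_noise_bound_tight_general n π ψ hπ1 hψ
end
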